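/- The integrated pointwise distance Θ_Y(g₀,g₁) = ∫_Y θ^g_x(g₀(x),g₁(x)) dμ_g(x) is independent of the choice of reference metric g: for any other reference g̃, ∫_Y θ^g_x(g₀(x),g₁(x)) dμ_g = ∫_Y θ^{g̃}_x(g₀(x),g₁(x)) dμ_{g̃}. -/
import Mathlib


open MeasureTheory Set Pointwise

/-! The manifold `𝓜` of Riemannian metrics on a closed orientable `n`-manifold `M`,
modelled concretely: the base manifold is represented by a (finite) measure space
`X` carrying the background coordinate measure `μ`, and a Riemannian metric is a
field `g : X → Matrix (Fin n) (Fin n) ℝ` of symmetric positive definite matrices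
(the components of the metric in coordinates).  Then `dμ_g = √(det g) dμ`,
`tr_g (h k) = tr (g⁻¹ h g⁻¹ k)`, and the `L²` (Ebin) metric, lengths, and distance
are as below. -/

variable {n : ℕ} {X : Type*} [MeasurableSpace X]

/-- `tr_g (h²) = tr (g⁻¹ h g⁻¹ h)`. -/
noncomputable def trg2 (g h : Matrix (Fin n) (Fin n) ℝ) : ℝ :=
  (g⁻¹ * h * g⁻¹ * h).trace

/-- `Vol (Y, g) = ∫_Y dμ_g = ∫_Y √(det g) dμ`. -/
noncomputable def Vol (μ : Measure X) (Y : Set X)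
    (g : X → Matrix (Fin n) (Fin n) ℝ) : ℝ :=
  ∫ x in Y, Real.sqrt (g x).det ∂μ

/-- `‖h‖_g² = ∫_M tr_g (h²) dμ_g`. -/
noncomputable def l2normSq (μ : Measure X)
    (g h : X → Matrix (Fin n) (Fin n) ℝ) : ℝ :=
  ∫ x, trg2 (g x) (h x) * Real.sqrt (g x).det ∂μ

/-- Entrywise `t`-derivative `g_t'` of a path of metric fields. -/
noncomputable def pathDeriv (g : ℝ → X → Matrix (Fin n) (Fin n) ℝ)
    (t : ℝ) (x : X) : Matrix (Fin n) (Fin n) ℝ :=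
  Matrix.of fun i j => deriv (fun s => g s x i j) t

/-- The `L²`-length `∫₀¹ ‖g_t'‖_{g_t} dt` of a path of metrics. -/
noncomputable def pathLength (μ : Measure X)
    (g : ℝ → X → Matrix (Fin n) (Fin n) ℝ) : ℝ :=
  ∫ t in (0:ℝ)..1, Real.sqrt (l2normSq μ (g t) (pathDeriv g t))

/-- An admissible path of Riemannian metrics from `g₀` to `g₁`. -/
def IsMetricPath (g : ℝ → X → Matrix (Fin n) (Fin n) ℝ)
    (g₀ g₁ : X → Matrix (Fin n) (Fin n) ℝ) : Prop :=
  g 0 = g₀ ∧ g 1 = g₁ ∧ (∀ t x, (g t x).PosDef) ∧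
    (∀ x i j, ContDiff ℝ (⊤ : ℕ∞) fun t => g t x i j) ∧
    ∀ t i j, Measurable fun x => g t x i j

/-- The `L²` (Ebin) distance: the infimum of `L²`-lengths of paths of metrics. -/
noncomputable def ebinDist (μ : Measure X)
    (g₀ g₁ : X → Matrix (Fin n) (Fin n) ℝ) : ℝ :=
  sInf {L | ∃ g, IsMetricPath g g₀ g₁ ∧ L = pathLength μ g}

/-- Entrywise derivative of a path of matrices. -/
noncomputable def mDeriv {n : ℕ} (p : ℝ → Matrix (Fin n) (Fin n) ℝ) (t : ℝ) :
    Matrix (Fin n) (Fin n) ℝ :=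
  Matrix.of fun i j => deriv (fun s => p s i j) t

/-- The fiberwise distance `θ^g_x` on positive definite matrices: the Riemannian
distance of the metric `⟨h,k⟩⁰_p = tr (p⁻¹ h p⁻¹ k) · det (g⁻¹ p)` (reference `g`). -/
noncomputable def theta {n : ℕ} (g a b : Matrix (Fin n) (Fin n) ℝ) : ℝ :=
  sInf {L | ∃ p : ℝ → Matrix (Fin n) (Fin n) ℝ,
    p 0 = a ∧ p 1 = b ∧ (∀ t, (p t).PosDef) ∧
    (∀ i j, ContDiff ℝ (⊤ : ℕ∞) fun t => p t i j) ∧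
    L = ∫ t in (0:ℝ)..1,
      Real.sqrt (((p t)⁻¹ * mDeriv p t * (p t)⁻¹ * mDeriv p t).trace *
        (g⁻¹ * p t).det)}

noncomputable def theta0 {n : ℕ} (a b : Matrix (Fin n) (Fin n) ℝ) : ℝ :=
  sInf {L | ∃ p : ℝ → Matrix (Fin n) (Fin n) ℝ,
    p 0 = a ∧ p 1 = b ∧ (∀ t, (p t).PosDef) ∧
    (∀ i j, ContDiff ℝ (⊤ : ℕ∞) fun t => p t i j) ∧
    L = ∫ t in (0:ℝ)..1,
      Real.sqrt (((p t)⁻¹ * mDeriv p t * (p t)⁻¹ * mDeriv p t).trace * (p t).det)}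


lemma theta_mul_sqrt {n : ℕ} (g a b : Matrix (Fin n) (Fin n) ℝ) (hg : g.PosDef) :
    theta g a b * Real.sqrt g.det = theta0 a b := by
  have hd : 0 < g.det := hg.det_pos
  have hs : 0 < Real.sqrt g.det := Real.sqrt_pos.2 hd
  have hset : {L | ∃ p : ℝ → Matrix (Fin n) (Fin n) ℝ,
      p 0 = a ∧ p 1 = b ∧ (∀ t, (p t).PosDef) ∧
      (∀ i j, ContDiff ℝ (⊤ : ℕ∞) fun t => p t i j) ∧
      L = ∫ t in (0:ℝ)..1,
        Real.sqrt (((p t)⁻¹ * mDeriv p t * (p t)⁻¹ * mDeriv p t).trace *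
          (g⁻¹ * p t).det)}
      = (Real.sqrt g.det)⁻¹ • {L | ∃ p : ℝ → Matrix (Fin n) (Fin n) ℝ,
      p 0 = a ∧ p 1 = b ∧ (∀ t, (p t).PosDef) ∧
      (∀ i j, ContDiff ℝ (⊤ : ℕ∞) fun t => p t i j) ∧
      L = ∫ t in (0:ℝ)..1,
        Real.sqrt (((p t)⁻¹ * mDeriv p t * (p t)⁻¹ * mDeriv p t).trace *
          (p t).det)} := by
    have key : ∀ p : ℝ → Matrix (Fin n) (Fin n) ℝ,
        (∫ t in (0:ℝ)..1,
          Real.sqrt (((p t)⁻¹ * mDeriv p t * (p t)⁻¹ * mDeriv p t).trace *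
            (g⁻¹ * p t).det))
        = (Real.sqrt g.det)⁻¹ * ∫ t in (0:ℝ)..1,
          Real.sqrt (((p t)⁻¹ * mDeriv p t * (p t)⁻¹ * mDeriv p t).trace *
            (p t).det) := by
      intro p
      rw [← intervalIntegral.integral_const_mul]
      apply intervalIntegral.integral_congr
      intro t _
      simp only
      rw [Matrix.det_mul, Matrix.det_nonsing_inv, Ring.inverse_eq_inv', ← div_eq_inv_mul,
        ← mul_div_assoc, Real.sqrt_div' _ hd.le, div_eq_inv_mul]
    ext L
    simp only [mem_smul_set, mem_setOf_eq, smul_eq_mul]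
    constructor
    · rintro ⟨p, h0, h1, hpd, hc, rfl⟩
      exact ⟨_, ⟨p, h0, h1, hpd, hc, rfl⟩, (key p).symm⟩
    · rintro ⟨L', ⟨p, h0, h1, hpd, hc, rfl⟩, rfl⟩
      exact ⟨p, h0, h1, hpd, hc, (key p).symm⟩
  rw [theta, hset, Real.sInf_smul_of_nonneg (inv_nonneg.2 hs.le), smul_eq_mul,
    theta0, mul_comm, ← mul_assoc, mul_inv_cancel₀ hs.ne', one_mul]

/-- The integrated fiberwise distance `Θ_Y(g₀,g₁) = ∫_Y θ^g_x(g₀(x),g₁(x)) dμ_g`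
is independent of the reference metric `g`. -/
theorem Theta_ref_independent (μ : Measure X)
    (g gt g₀ g₁ : X → Matrix (Fin n) (Fin n) ℝ)
    (hg : ∀ x, (g x).PosDef) (hgt : ∀ x, (gt x).PosDef)
    (hpos₀ : ∀ x, (g₀ x).PosDef) (hpos₁ : ∀ x, (g₁ x).PosDef)
    (hmeasg : ∀ i j, Measurable fun x => g x i j)
    (hmeasgt : ∀ i j, Measurable fun x => gt x i j)
    (hmeas₀ : ∀ i j, Measurable fun x => g₀ x i j)
    (hmeas₁ : ∀ i j, Measurable fun x => g₁ x i j)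
    (Y : Set X) (hY : MeasurableSet Y) :
    ∫ x in Y, theta (g x) (g₀ x) (g₁ x) * Real.sqrt (g x).det ∂μ =
      ∫ x in Y, theta (gt x) (g₀ x) (g₁ x) * Real.sqrt (gt x).det ∂μ := by
  simp only [fun x => theta_mul_sqrt (g x) (g₀ x) (g₁ x) (hg x),
    fun x => theta_mul_sqrt (gt x) (g₀ x) (g₁ x) (hgt x)]
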